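/- arXiv:1805.11386 — 5 statements merged into one kernel-verified Lean document; each statement's English description precedes it below -/
import Mathlib

section
/- Let B be a d×d real symmetric positive semidefinite matrix, x ∈ R^d, and A = B + x xᵀ. Let r = rank(A) and assume r ≥ 1. Then xᵀ A† x = 1 - ∏_{k=1}^{r} λ_k(B)/λ_k(A), where A† is the Moore-Penrose pseudoinverse of A and λ_k(M) denotes the k-th largest eigenvalue of M. -/
/-!
Diagonalize `A = W diag(λ) Wᵀ` with `W` orthogonal and put `y = Wᵀ x`. Then `A† = W diag(λ⁻¹) Wᵀ`,
so `xᵀ A† x = ∑_{λ_k ≠ 0} y_k² / λ_k`, and `C := Wᵀ B W = diag(λ) - y yᵀ`. Positivity of `C`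
forces `y_k = 0` wherever `λ_k = 0`, so `C` vanishes outside the block `S = {k | λ_k ≠ 0}` of size
`r = rank A`, and on `S` it is `diag(λ_S) - y_S y_Sᵀ`, whose determinant is
`(∏_S λ_k) (1 - ∑_S y_k² / λ_k)` by the matrix determinant lemma. Since `B` has the characteristic
polynomial of `C`, which is `X^(d-r)` times that of the block, and `rank B ≤ r`, the product of the
`r` largest eigenvalues of `B` is the determinant of the block, while that of `A` is `∏_S λ_k`.
-/

open Matrix

def IsMoorePenrose {m n : ℕ} (M : Matrix (Fin m) (Fin n) ℝ)
    (Md : Matrix (Fin n) (Fin m) ℝ) : Prop :=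
  M * Md * M = M ∧ Md * M * Md = Md ∧ (M * Md)ᵀ = M * Md ∧ (Md * M)ᵀ = Md * M

open Polynomial Finset

theorem IsMoorePenrose.unique {m n : ℕ} {M : Matrix (Fin m) (Fin n) ℝ}
    {X Y : Matrix (Fin n) (Fin m) ℝ} (hX : IsMoorePenrose M X) (hY : IsMoorePenrose M Y) :
    X = Y := by
  obtain ⟨hMXM, hXMX, hMX, hXM⟩ := hX
  obtain ⟨hMYM, hYMY, hMY, hYM⟩ := hY
  have hleft : M * X = M * Y := by
    calc M * X = (M * Y * M * X)ᵀ := by rw [hMYM, hMX]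
      _ = (M * X) * (M * Y) := by rw [Matrix.mul_assoc, transpose_mul, hMX, hMY]
      _ = M * Y := by rw [← Matrix.mul_assoc, hMXM]
  have hright : X * M = Y * M := by
    calc X * M = (X * (M * Y * M))ᵀ := by rw [hMYM, hXM]
      _ = ((X * M) * (Y * M))ᵀ := by simp only [Matrix.mul_assoc]
      _ = (Y * M) * (X * M) := by rw [transpose_mul, hXM, hYM]
      _ = Y * M := by rw [Matrix.mul_assoc, ← Matrix.mul_assoc M, hMXM]
  calc X = X * M * X := hXMX.symm
    _ = Y * M * Y := by rw [hright, Matrix.mul_assoc, hleft, ← Matrix.mul_assoc]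
    _ = Y := hYMY

/-- Entrywise inversion pseudo-inverts a diagonal matrix because `(0 : ℝ)⁻¹ = 0`. -/
theorem isMoorePenrose_mul_diagonal_mul_transpose {d : ℕ} {W : Matrix (Fin d) (Fin d) ℝ}
    (hW : Wᵀ * W = 1) (μ : Fin d → ℝ) :
    IsMoorePenrose (W * diagonal μ * Wᵀ) (W * diagonal μ⁻¹ * Wᵀ) := by
  have hmul (u v : Fin d → ℝ) :
      W * diagonal u * Wᵀ * (W * diagonal v * Wᵀ) = W * diagonal (u * v) * Wᵀ := by
    calc W * diagonal u * Wᵀ * (W * diagonal v * Wᵀ)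
        = W * diagonal u * (Wᵀ * W) * diagonal v * Wᵀ := by simp only [Matrix.mul_assoc]
      _ = W * diagonal (u * v) * Wᵀ := by
        rw [hW, Matrix.mul_one, Matrix.mul_assoc W, diagonal_mul_diagonal]; rfl
  have hsymm (u : Fin d → ℝ) : (W * diagonal u * Wᵀ)ᵀ = W * diagonal u * Wᵀ := by
    rw [transpose_mul, transpose_mul, transpose_transpose, diagonal_transpose, Matrix.mul_assoc]
  refine ⟨?_, ?_, ?_, ?_⟩
  · rw [hmul, hmul, show μ * μ⁻¹ * μ = μ from funext fun k => mul_inv_mul_cancel (μ k)]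
  · rw [hmul, hmul, show μ⁻¹ * μ * μ⁻¹ = μ⁻¹ from funext fun k => by
      simpa using mul_inv_mul_cancel (μ k)⁻¹]
  · rw [hmul, hsymm]
  · rw [hmul, hsymm]

namespace Matrix

section

variable {n : Type*} [DecidableEq n]

theorem submatrix_diagonal_sub_vecMulVec {R : Type*} [Ring R] {m : Type*} [DecidableEq m]
    {f : m → n} (hf : Function.Injective f) (e u v : n → R) :
    (diagonal e - vecMulVec u v).submatrix f f
      = diagonal (fun i => e (f i)) - vecMulVec (fun i => u (f i)) (fun i => v (f i)) := by
  ext i j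
  simp [diagonal_apply, vecMulVec_apply, hf.eq_iff]

theorem PosSemidef.eq_zero_of_diagonal_sub_vecMulVec {e y : n → ℝ}
    (h : (diagonal e - vecMulVec y y).PosSemidef) {k : n} (hk : e k = 0) : y k = 0 := by
  have := h.diag_nonneg (i := k)
  simp only [sub_apply, diagonal_apply_eq, hk, vecMulVec_apply, zero_sub, neg_nonneg] at this
  exact mul_self_eq_zero.mp (le_antisymm this (mul_self_nonneg _))

theorem PosSemidef.diagonal_sub_vecMulVec_apply_eq_zero {e y : n → ℝ}
    (h : (diagonal e - vecMulVec y y).PosSemidef) {i j : n} (hij : e i = 0 ∨ e j = 0) :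
    (diagonal e - vecMulVec y y) i j = 0 := by
  have hdiag : diagonal e i j = 0 := by
    rcases eq_or_ne i j with rfl | hne
    · simpa using hij
    · exact diagonal_apply_ne _ hne
  rcases hij with hi | hj
  · simp [hdiag, vecMulVec_apply, h.eq_zero_of_diagonal_sub_vecMulVec hi]
  · simp [hdiag, vecMulVec_apply, h.eq_zero_of_diagonal_sub_vecMulVec hj]

variable [Fintype n]

theorem IsHermitian.exists_orthogonal_diagonalization {A : Matrix n n ℝ} (hA : A.IsHermitian) :
    ∃ W : Matrix n n ℝ, Wᵀ * W = 1 ∧ A = W * diagonal hA.eigenvalues * Wᵀ := by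
  refine ⟨hA.eigenvectorUnitary, ?_, ?_⟩
  · simpa [star_eq_conjTranspose] using Unitary.coe_star_mul_self hA.eigenvectorUnitary
  · conv_lhs => rw [hA.spectral_theorem]
    simp [Unitary.conjStarAlgAut_apply, star_eq_conjTranspose]

theorem mul_diagonal_sub_vecMulVec_mul_transpose {R : Type*} [CommRing R] {W : Matrix n n R}
    (hW : Wᵀ * W = 1) (e x : n → R) :
    W * (diagonal e - vecMulVec (Wᵀ *ᵥ x) (Wᵀ *ᵥ x)) * Wᵀ
      = W * diagonal e * Wᵀ - vecMulVec x x := by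
  have hx : W *ᵥ (Wᵀ *ᵥ x) = x := by rw [mulVec_mulVec, mul_eq_one_comm.mp hW, one_mulVec]
  rw [Matrix.mul_sub, Matrix.sub_mul, mul_vecMulVec, vecMulVec_mul, vecMul_transpose, hx]

theorem dotProduct_mul_diagonal_inv_mul_transpose_mulVec {K : Type*} [Field K] [DecidableEq K]
    {m : Type*} [Fintype m] (W : Matrix m n K) (e : n → K) (x : m → K) :
    x ⬝ᵥ (W * diagonal e⁻¹ * Wᵀ) *ᵥ x
      = ∑ k : {k // e k ≠ 0}, (Wᵀ *ᵥ x) k * (Wᵀ *ᵥ x) k / e k := by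
  set y := Wᵀ *ᵥ x
  rw [← mulVec_mulVec, ← mulVec_mulVec, dotProduct_mulVec, ← mulVec_transpose]
  calc y ⬝ᵥ diagonal e⁻¹ *ᵥ y = ∑ k, y k * y k / e k := by
        simp only [dotProduct, mulVec_diagonal, Pi.inv_apply]
        exact sum_congr rfl fun k _ => by ring
    _ = ∑ k ∈ univ.filter (fun k => e k ≠ 0), y k * y k / e k :=
        (sum_filter_of_ne (p := fun k => e k ≠ 0) fun k _ hk h => hk (by rw [h, div_zero])).symm
    _ = _ := sum_subtype _ (by simp) _

theorem det_diagonal_sub_vecMulVec {K : Type*} [Field K] {μ : n → K} (hμ : ∀ i, μ i ≠ 0)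
    (u v : n → K) :
    (diagonal μ - vecMulVec u v).det = (∏ i, μ i) * (1 - ∑ i, u i * v i / μ i) := by
  have hfactor : diagonal μ - vecMulVec u v
      = diagonal μ * (1 + replicateCol Unit (-(μ⁻¹ * u)) * replicateRow Unit v) := by
    have hu : diagonal μ *ᵥ -(μ⁻¹ * u) = -u := funext fun i => by
      simp [mulVec_diagonal, hμ i]
    rw [← vecMulVec_eq, Matrix.mul_add, Matrix.mul_one, mul_vecMulVec, hu, neg_vecMulVec,
      sub_eq_add_neg]
  rw [hfactor, det_mul, det_diagonal, det_one_add_replicateCol_mul_replicateRow]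
  congr 1
  simp only [dotProduct, Pi.neg_apply, Pi.mul_apply, Pi.inv_apply, mul_neg, sum_neg_distrib,
    sub_eq_add_neg]
  congr 2
  exact sum_congr rfl fun i _ => by ring

theorem det_eq_prod_of_charpoly_eq {R ι : Type*} [CommRing R] [Nontrivial R] {M : Matrix n n R}
    {s : Finset ι} {a : ι → R} (h : M.charpoly = ∏ i ∈ s, (X - C (a i))) :
    M.det = ∏ i ∈ s, a i := by
  have hcard : #s = Fintype.card n := by
    rw [← natDegree_finsetProd_X_sub_C_eq_card s a, ← h, charpoly_natDegree_eq_dim]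
  rw [det_eq_sign_charpoly_coeff, h, coeff_zero_eq_eval_zero, eval_prod]
  simp [prod_neg, hcard, ← mul_assoc, ← pow_add]

theorem charpoly_eq_charpoly_submatrix_mul_X_pow {R : Type*} [CommRing R] [Nontrivial R]
    {M : Matrix n n R} (p : n → Prop) [DecidablePred p]
    (hM : ∀ i j, ¬p i ∨ ¬p j → M i j = 0) :
    M.charpoly = (M.submatrix ((↑) : {i // p i} → n) (↑)).charpoly
      * X ^ Fintype.card {i // ¬p i} := by
  have hblocks : reindex (Equiv.sumCompl p).symm (Equiv.sumCompl p).symm M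
      = fromBlocks (M.submatrix (↑) (↑)) 0 0 0 := by
    ext (i | i) (j | j) <;> simp [hM, i.2, j.2]
  rw [← charpoly_reindex (Equiv.sumCompl p).symm M, hblocks, charpoly_fromBlocks_zero₁₂,
    charpoly_zero]

theorem rank_le_card_of_apply_eq_zero {K : Type*} [Field K] {M : Matrix n n K}
    (p : n → Prop) [DecidablePred p] (hM : ∀ i j, ¬p j → M i j = 0) :
    M.rank ≤ Fintype.card {i // p i} := by
  classical
  have hmask : M = M * diagonal fun j => if p j then 1 else 0 := by
    ext i j
    by_cases hj : p j <;> simp [hj, hM]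
  calc M.rank = (M * diagonal fun j => if p j then (1 : K) else 0).rank := by rw [← hmask]
    _ ≤ (diagonal fun j => if p j then (1 : K) else 0).rank := rank_mul_le_right _ _
    _ = Fintype.card {i // p i} := by
      rw [rank_diagonal]
      exact Fintype.card_congr (Equiv.subtypeEquivRight fun j => by by_cases hj : p j <;> simp [hj])

end

namespace PosSemidef

variable {d : ℕ} {B : Matrix (Fin d) (Fin d) ℝ} (hB : B.PosSemidef) {μ : Fin d → ℝ}
  (hμ : Antitone μ) (hσ : ∃ σ : Equiv.Perm (Fin d), μ = hB.1.eigenvalues ∘ σ)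
include hB hμ hσ

theorem ne_zero_iff_lt_rank_of_antitone (k : Fin d) : μ k ≠ 0 ↔ (k : ℕ) < B.rank := by
  obtain ⟨σ, rfl⟩ := hσ
  have hcard : B.rank = #{i | hB.1.eigenvalues (σ i) ≠ 0} := by
    rw [hB.1.rank_eq_card_non_zero_eigs, ← Fintype.card_subtype]
    exact Fintype.card_congr (σ.subtypeEquiv fun _ => Iff.rfl).symm
  rw [hcard]
  refine (Fin.lt_card_filter_univ_iff_apply_of_imp (fun i => hB.1.eigenvalues (σ i) ≠ 0)
    fun i j hji hi => ?_).symm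
  exact ((lt_of_le_of_ne (hB.eigenvalues_nonneg _) (Ne.symm hi)).trans_le (hμ hji)).ne'

theorem prod_filter_lt_rank_of_antitone :
    ∏ k ∈ univ.filter (fun k : Fin d => (k : ℕ) < B.rank), μ k
      = ∏ k : {k // hB.1.eigenvalues k ≠ 0}, hB.1.eigenvalues k := by
  have ⟨σ, hσμ⟩ := hσ
  calc ∏ k ∈ univ.filter (fun k : Fin d => (k : ℕ) < B.rank), μ k
        = ∏ k ∈ univ.filter (fun k => μ k ≠ 0), μ k :=
        prod_congr (filter_congr fun k _ => (hB.ne_zero_iff_lt_rank_of_antitone hμ hσ k).symm)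
          fun _ _ => rfl
    _ = ∏ k ∈ univ.filter (fun k => hB.1.eigenvalues k ≠ 0), hB.1.eigenvalues k :=
        prod_equiv σ (by simp [hσμ]) (by simp [hσμ])
    _ = _ := prod_subtype _ (by simp) _

theorem charpoly_eq_prod_filter_lt_mul_X_pow {r : ℕ} (hr : B.rank ≤ r) :
    B.charpoly
      = (∏ k ∈ univ.filter (fun k : Fin d => (k : ℕ) < r), (X - C (μ k))) * X ^ (d - r) := by
  have ⟨σ, hσμ⟩ := hσ
  have hzero : ∀ k : Fin d, ¬(k : ℕ) < r → μ k = 0 := fun k hk => by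
    by_contra h
    exact hk ((hB.ne_zero_iff_lt_rank_of_antitone hμ hσ k).mp h |>.trans_le hr)
  have hcard : #{k : Fin d | ¬(k : ℕ) < r} = d - r := by
    have := card_filter_add_card_filter_not (s := univ) fun k : Fin d => (k : ℕ) < r
    rw [Fin.card_filter_val_lt, card_univ, Fintype.card_fin] at this
    omega
  calc B.charpoly = ∏ k, (X - C (μ k)) := by
        rw [hB.1.charpoly_eq, hσμ, ← Equiv.prod_comp σ]
        rfl
    _ = (∏ k ∈ univ.filter (fun k : Fin d => (k : ℕ) < r), (X - C (μ k)))
          * ∏ k ∈ univ.filter (fun k : Fin d => ¬(k : ℕ) < r), (X - C (μ k)) :=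
        (prod_filter_mul_prod_filter_not _ _ _).symm
    _ = _ := by
        congr 1
        rw [prod_congr rfl fun k hk => by rw [hzero k (mem_filter.mp hk).2, C_0, sub_zero],
          prod_const, hcard]

theorem prod_filter_lt_eq_det_submatrix {W C : Matrix (Fin d) (Fin d) ℝ} (hW : Wᵀ * W = 1)
    (hBC : B = W * C * Wᵀ) (p : Fin d → Prop) [DecidablePred p]
    (hC : ∀ i j, ¬p i ∨ ¬p j → C i j = 0) :
    ∏ k ∈ univ.filter (fun k : Fin d => (k : ℕ) < Fintype.card {i // p i}), μ k
      = (C.submatrix ((↑) : {i // p i} → Fin d) (↑)).det := by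
  have hrank : B.rank ≤ Fintype.card {i // p i} := by
    rw [hBC]
    exact (rank_mul_le_left _ _).trans <| (rank_mul_le_right _ _).trans <|
      C.rank_le_card_of_apply_eq_zero p fun i j hj => hC i j (Or.inr hj)
  have hchar : B.charpoly = C.charpoly := by
    rw [hBC, charpoly_mul_comm, ← Matrix.mul_assoc, hW, Matrix.one_mul]
  have hcompl : Fintype.card {i // ¬p i} = d - Fintype.card {i // p i} := by
    rw [Fintype.card_subtype_compl, Fintype.card_fin]
  refine (det_eq_prod_of_charpoly_eq <| mul_right_cancel₀
    (pow_ne_zero (d - Fintype.card {i // p i}) X_ne_zero) ?_).symm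
  rw [← hB.charpoly_eq_prod_filter_lt_mul_X_pow hμ hσ hrank, hchar,
    C.charpoly_eq_charpoly_submatrix_mul_X_pow p hC, hcompl]

end PosSemidef

end Matrix

theorem stmt2_general {d : ℕ} (B : Matrix (Fin d) (Fin d) ℝ) (hB : B.PosSemidef)
    (x : Fin d → ℝ) (A : Matrix (Fin d) (Fin d) ℝ)
    (hA : A = B + Matrix.vecMulVec x x) (hAh : A.IsHermitian)
    (Adag : Matrix (Fin d) (Fin d) ℝ) (hdag : IsMoorePenrose A Adag)
    (μA μB : Fin d → ℝ) (hμA : Antitone μA) (hμB : Antitone μB)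
    (hpermA : ∃ σ : Equiv.Perm (Fin d), μA = hAh.eigenvalues ∘ σ)
    (hpermB : ∃ σ : Equiv.Perm (Fin d), μB = hB.1.eigenvalues ∘ σ)
    (r : ℕ) (hr : r = A.rank) :
    x ⬝ᵥ (Adag *ᵥ x) =
      1 - ∏ k ∈ Finset.univ.filter (fun k : Fin d => (k : ℕ) < r), (μB k / μA k) := by
  have hApsd : A.PosSemidef := hA ▸ hB.add (by simpa using posSemidef_vecMulVec_self_star x)
  obtain ⟨W, hW, hAW⟩ := hApsd.1.exists_orthogonal_diagonalization
  have hBW :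
      B = W * (diagonal hApsd.1.eigenvalues - vecMulVec (Wᵀ *ᵥ x) (Wᵀ *ᵥ x)) * Wᵀ := by
    rw [mul_diagonal_sub_vecMulVec_mul_transpose hW, ← hAW, hA, add_sub_cancel_right]
  have hC : (diagonal hApsd.1.eigenvalues - vecMulVec (Wᵀ *ᵥ x) (Wᵀ *ᵥ x)).PosSemidef := by
    have hWunit : IsUnit W := (isUnit_iff_isUnit_det W).mpr (isUnit_det_of_left_inverse hW)
    refine hWunit.posSemidef_star_right_conjugate_iff.mp ?_
    simpa [star_eq_conjTranspose, hBW] using hB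
  subst hr
  rw [prod_div_distrib, hApsd.prod_filter_lt_rank_of_antitone hμA hpermA,
    hApsd.1.rank_eq_card_non_zero_eigs,
    hB.prod_filter_lt_eq_det_submatrix hμB hpermB hW hBW (fun k => hApsd.1.eigenvalues k ≠ 0)
      fun i j hij => hC.diagonal_sub_vecMulVec_apply_eq_zero (by simpa only [not_not] using hij)]
  rw [submatrix_diagonal_sub_vecMulVec Subtype.val_injective, det_diagonal_sub_vecMulVec (·.2),
    mul_div_cancel_left₀ _ (prod_ne_zero_iff.mpr fun k _ => k.2), sub_sub_cancel]
  rw [hdag.unique (hAW ▸ isMoorePenrose_mul_diagonal_mul_transpose hW _),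
    dotProduct_mul_diagonal_inv_mul_transpose_mulVec]

/-- For `B` symmetric PSD, `A = B + x xᵀ` of rank `r ≥ 1`, one has
`xᵀ A† x = 1 - ∏_{k=1}^r λ_k(B)/λ_k(A)` where `λ_k` are the eigenvalues in
non-increasing order. -/
theorem stmt2 {d : ℕ} (B : Matrix (Fin d) (Fin d) ℝ) (hB : B.PosSemidef)
    (x : Fin d → ℝ) (A : Matrix (Fin d) (Fin d) ℝ)
    (hA : A = B + Matrix.vecMulVec x x) (hAh : A.IsHermitian)
    (Adag : Matrix (Fin d) (Fin d) ℝ) (hdag : IsMoorePenrose A Adag)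
    (μA μB : Fin d → ℝ) (hμA : Antitone μA) (hμB : Antitone μB)
    (hpermA : ∃ σ : Equiv.Perm (Fin d), μA = hAh.eigenvalues ∘ σ)
    (hpermB : ∃ σ : Equiv.Perm (Fin d), μB = hB.1.eigenvalues ∘ σ)
    (r : ℕ) (hr : r = A.rank) (hr1 : 1 ≤ r) :
    x ⬝ᵥ (Adag *ᵥ x) =
      1 - ∏ k ∈ Finset.univ.filter (fun k : Fin d => (k : ℕ) < r), (μB k / μA k) :=
  stmt2_general B hB x A hA hAh Adag hdag μA μB hμA hμB hpermA hpermB r hr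
end

section
/- Let M be an m×n real matrix and N an n×p real matrix. If Mᵀ M = I_n or N Nᵀ = I_n, then (M N)† = N† M†. -/
/-!
The four Penrose conditions determine the pseudoinverse uniquely, so it suffices to check them
for `N† M†`. If `Mᵀ M = 1` then `M† = Mᵀ`, and the conditions for `(M N, N† Mᵀ)` reduce to those
for `(N, N†)` because `N† Mᵀ M N = N† N`. The case `N Nᵀ = 1` is the transpose of this one, since
the Penrose conditions are invariant under transposing both matrices.
-/

open Matrix

namespace IsMoorePenrose

variable {a b : ℕ}

theorem unique_s7 {A : Matrix (Fin a) (Fin b) ℝ} {B C : Matrix (Fin b) (Fin a) ℝ}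
    (hB : IsMoorePenrose A B) (hC : IsMoorePenrose A C) : B = C := by
  obtain ⟨hB1, hB2, hB3, hB4⟩ := hB
  obtain ⟨hC1, hC2, hC3, hC4⟩ := hC
  have hAB : A * B = A * C :=
    calc A * B = (A * B)ᵀ := hB3.symm
    _ = Bᵀ * (A * C * A)ᵀ := by rw [hC1, transpose_mul]
    _ = (A * B)ᵀ * (A * C)ᵀ := by simp only [transpose_mul, Matrix.mul_assoc]
    _ = A * B * A * C := by rw [hB3, hC3, Matrix.mul_assoc (A * B)]
    _ = A * C := by rw [hB1]
  have hBA : B * A = C * A :=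
    calc B * A = (B * A)ᵀ := hB4.symm
    _ = (A * C * A)ᵀ * Bᵀ := by rw [hC1, transpose_mul]
    _ = (C * A)ᵀ * (B * A)ᵀ := by simp only [transpose_mul, Matrix.mul_assoc]
    _ = C * (A * B * A) := by rw [hB4, hC4]; simp only [Matrix.mul_assoc]
    _ = C * A := by rw [hB1]
  calc B = B * A * B := hB2.symm
  _ = C * A * C := by rw [hBA, Matrix.mul_assoc, hAB, ← Matrix.mul_assoc]
  _ = C := hC2

theorem transpose {A : Matrix (Fin a) (Fin b) ℝ} {B : Matrix (Fin b) (Fin a) ℝ}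
    (h : IsMoorePenrose A B) : IsMoorePenrose Aᵀ Bᵀ := by
  obtain ⟨h1, h2, h3, h4⟩ := h
  refine ⟨?_, ?_, ?_, ?_⟩
  · simpa only [transpose_mul, Matrix.mul_assoc] using congrArg Matrix.transpose h1
  · simpa only [transpose_mul, Matrix.mul_assoc] using congrArg Matrix.transpose h2
  · rw [← transpose_mul, transpose_transpose, h4]
  · rw [← transpose_mul, transpose_transpose, h3]

end IsMoorePenrose

section Orthonormal

variable {a b c : ℕ} {M : Matrix (Fin a) (Fin b) ℝ} {N : Matrix (Fin b) (Fin c) ℝ}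

theorem isMoorePenrose_transpose_of_transpose_mul_self_eq_one (hM : Mᵀ * M = 1) :
    IsMoorePenrose M Mᵀ := by
  refine ⟨?_, ?_, ?_, ?_⟩
  · rw [Matrix.mul_assoc, hM, Matrix.mul_one]
  · rw [hM, Matrix.one_mul]
  · rw [transpose_mul, transpose_transpose]
  · rw [hM, transpose_one]

theorem IsMoorePenrose.mul_transpose_of_transpose_mul_self_eq_one (hM : Mᵀ * M = 1)
    {Nd : Matrix (Fin c) (Fin b) ℝ} (hNd : IsMoorePenrose N Nd) :
    IsMoorePenrose (M * N) (Nd * Mᵀ) := by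
  obtain ⟨h1, h2, h3, h4⟩ := hNd
  have hcancel : Nd * Mᵀ * (M * N) = Nd * N := by
    rw [Matrix.mul_assoc, ← Matrix.mul_assoc Mᵀ, hM, Matrix.one_mul]
  refine ⟨?_, ?_, ?_, ?_⟩
  · rw [Matrix.mul_assoc (M * N), hcancel, Matrix.mul_assoc M, ← Matrix.mul_assoc N, h1]
  · rw [hcancel, ← Matrix.mul_assoc, h2]
  · rw [show M * N * (Nd * Mᵀ) = M * (N * Nd) * Mᵀ by simp only [Matrix.mul_assoc],
      transpose_mul, transpose_mul, transpose_transpose, h3]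
    simp only [Matrix.mul_assoc]
  · rw [hcancel, h4]

theorem IsMoorePenrose.mul_of_transpose_mul_self_eq_one (hM : Mᵀ * M = 1)
    {Md : Matrix (Fin b) (Fin a) ℝ} (hMd : IsMoorePenrose M Md)
    {Nd : Matrix (Fin c) (Fin b) ℝ} (hNd : IsMoorePenrose N Nd) :
    IsMoorePenrose (M * N) (Nd * Md) := by
  rw [hMd.unique_s7 (isMoorePenrose_transpose_of_transpose_mul_self_eq_one hM)]
  exact hNd.mul_transpose_of_transpose_mul_self_eq_one hM

theorem IsMoorePenrose.mul_of_mul_transpose_self_eq_one (hN : N * Nᵀ = 1)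
    {Md : Matrix (Fin b) (Fin a) ℝ} (hMd : IsMoorePenrose M Md)
    {Nd : Matrix (Fin c) (Fin b) ℝ} (hNd : IsMoorePenrose N Nd) :
    IsMoorePenrose (M * N) (Nd * Md) := by
  have hNt : Nᵀᵀ * Nᵀ = 1 := by rwa [transpose_transpose]
  simpa only [transpose_mul, transpose_transpose] using
    (hNd.transpose.mul_of_transpose_mul_self_eq_one hNt hMd.transpose).transpose

end Orthonormal

/-- If `Mᵀ M = I_n` or `N Nᵀ = I_n`, then `(M N)† = N† M†`. -/
theorem stmt7 {m n p : ℕ} (M : Matrix (Fin m) (Fin n) ℝ) (N : Matrix (Fin n) (Fin p) ℝ)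
    (h : Mᵀ * M = 1 ∨ N * Nᵀ = 1)
    (Md : Matrix (Fin n) (Fin m) ℝ) (hMd : IsMoorePenrose M Md)
    (Nd : Matrix (Fin p) (Fin n) ℝ) (hNd : IsMoorePenrose N Nd)
    (P : Matrix (Fin p) (Fin m) ℝ) (hP : IsMoorePenrose (M * N) P) :
    P = Nd * Md := by
  refine hP.unique_s7 ?_
  rcases h with hM | hN
  · exact hMd.mul_of_transpose_mul_self_eq_one hM hNd
  · exact hMd.mul_of_mul_transpose_self_eq_one hN hNd
end

section
/- Let M be an m×n real matrix. Then M† = lim_{α → 0⁺} Mᵀ (α I_m + M Mᵀ)⁻¹, where for every α > 0 the matrix α I_m + M Mᵀ is invertible. -/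
/-!
For `α > 0` both `α I + M Mᵀ` and `I + α M† M†ᵀ` are positive definite, hence invertible.
The Penrose equations give `M† M Mᵀ = Mᵀ` and `M† M†ᵀ Mᵀ = M†`, and with these one checks the
exact identity `Mᵀ (α I + M Mᵀ)⁻¹ = M† - α (I + α M† M†ᵀ)⁻¹ M† M†ᵀ M†`. Its right-hand side is
continuous in `α` and equals `M†` at `α = 0`.
-/

open Matrix

open Filter Topology

namespace Matrix

section CommRing

variable {R : Type*} [CommRing R] {m n : Type*} [Fintype m] [Fintype n]

theorem mul_mul_transpose_of_penrose {M : Matrix m n R} {Md : Matrix n m R}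
    (h₁ : M * Md * M = M) (h₄ : (Md * M)ᵀ = Md * M) : Md * (M * Mᵀ) = Mᵀ := by
  rw [← Matrix.mul_assoc, ← h₄, ← transpose_mul, ← Matrix.mul_assoc, h₁]

theorem mul_transpose_mul_transpose_of_penrose {M : Matrix m n R} {Md : Matrix n m R}
    (h₂ : Md * M * Md = Md) (h₃ : (M * Md)ᵀ = M * Md) : Md * Mdᵀ * Mᵀ = Md := by
  rw [Matrix.mul_assoc, ← transpose_mul, h₃, ← Matrix.mul_assoc, h₂]

theorem transpose_mul_inv_smul_one_add_mul_transpose [DecidableEq m] [DecidableEq n]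
    {M : Matrix m n R} {Md : Matrix n m R}
    (h₁ : M * Md * M = M) (h₂ : Md * M * Md = Md) (h₃ : (M * Md)ᵀ = M * Md)
    (h₄ : (Md * M)ᵀ = Md * M) {α : R} (hS : IsUnit (α • (1 : Matrix m m R) + M * Mᵀ).det)
    (hT : IsUnit (1 + α • (Md * Mdᵀ)).det) :
    Mᵀ * (α • (1 : Matrix m m R) + M * Mᵀ)⁻¹ =
      Md - α • ((1 + α • (Md * Mdᵀ))⁻¹ * (Md * Mdᵀ * Md)) := by
  set S := α • (1 : Matrix m m R) + M * Mᵀ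
  set K := Md * Mdᵀ
  have hMdS : Md * S = α • Md + Mᵀ := by
    rw [Matrix.mul_add, Matrix.mul_smul, Matrix.mul_one, mul_mul_transpose_of_penrose h₁ h₄]
  have hKMdS : K * (Md * S) = (1 + α • K) * Md := by
    rw [hMdS, Matrix.mul_add, mul_transpose_mul_transpose_of_penrose h₂ h₃, Matrix.mul_smul,
      Matrix.add_mul, Matrix.one_mul, Matrix.smul_mul, add_comm]
  suffices h : (Md - α • ((1 + α • K)⁻¹ * (K * Md))) * S = Mᵀ by
    rw [← h, mul_nonsing_inv_cancel_right _ _ hS]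
  rw [Matrix.sub_mul, Matrix.smul_mul, Matrix.mul_assoc, Matrix.mul_assoc, hKMdS,
    nonsing_inv_mul_cancel_left _ _ hT, hMdS, add_sub_cancel_left]

end CommRing

theorem posSemidef_mul_transpose {m n : Type*} [Fintype m] [Fintype n] (A : Matrix m n ℝ) :
    (A * Aᵀ).PosSemidef := by
  simpa only [conjTranspose_eq_transpose_of_trivial] using posSemidef_self_mul_conjTranspose A

theorem posDef_smul_one_add_mul_transpose {m n : Type*} [Fintype m] [DecidableEq m] [Fintype n]
    (A : Matrix m n ℝ) {α : ℝ} (hα : 0 < α) : (α • (1 : Matrix m m ℝ) + A * Aᵀ).PosDef :=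
  (PosDef.one.smul hα).add_posSemidef (posSemidef_mul_transpose A)

theorem posDef_one_add_smul_mul_transpose {m n : Type*} [Fintype m] [DecidableEq m] [Fintype n]
    (A : Matrix m n ℝ) {α : ℝ} (hα : 0 ≤ α) : (1 + α • (A * Aᵀ)).PosDef :=
  PosDef.one.add_posSemidef ((posSemidef_mul_transpose A).smul hα)

theorem continuousAt_inv_one_add_smul {n : Type*} [Fintype n] [DecidableEq n]
    (K : Matrix n n ℝ) : ContinuousAt (fun α : ℝ => (1 + α • K)⁻¹) 0 := by
  have hinv : ContinuousAt Inv.inv (1 : Matrix n n ℝ) :=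
    continuousAt_matrix_inv _ (by simp)
  refine ContinuousAt.comp (g := Inv.inv) ?_ (by fun_prop)
  simpa using hinv

theorem tendsto_sub_smul_inv_one_add_smul_mul {m n : Type*} [Fintype n] [DecidableEq n]
    (K : Matrix n n ℝ) (A B : Matrix n m ℝ) :
    Tendsto (fun α : ℝ => A - α • ((1 + α • K)⁻¹ * B)) (𝓝 0) (𝓝 A) := by
  have hmul : Continuous fun X : Matrix n n ℝ => X * B := continuous_id.matrix_mul continuous_const
  have h : ContinuousAt (fun α : ℝ => A - α • ((1 + α • K)⁻¹ * B)) 0 :=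
    continuousAt_const.sub
      (continuousAt_id.smul (hmul.continuousAt.comp (continuousAt_inv_one_add_smul K)))
  simpa using h.tendsto

end Matrix

/-- For every `α > 0` the matrix `α I_m + M Mᵀ` is invertible, and
`M† = lim_{α → 0⁺} Mᵀ (α I_m + M Mᵀ)⁻¹` (entrywise limit). -/
theorem stmt9 {m n : ℕ} (M : Matrix (Fin m) (Fin n) ℝ)
    (Md : Matrix (Fin n) (Fin m) ℝ) (hMd : IsMoorePenrose M Md) :
    (∀ α : ℝ, 0 < α → IsUnit (α • (1 : Matrix (Fin m) (Fin m) ℝ) + M * Mᵀ).det) ∧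
      Filter.Tendsto
        (fun α : ℝ => Mᵀ * (α • (1 : Matrix (Fin m) (Fin m) ℝ) + M * Mᵀ)⁻¹)
        (nhdsWithin 0 (Set.Ioi 0)) (nhds Md) := by
  obtain ⟨h₁, h₂, h₃, h₄⟩ := hMd
  have hS (α : ℝ) (hα : 0 < α) : IsUnit (α • (1 : Matrix (Fin m) (Fin m) ℝ) + M * Mᵀ).det :=
    (posDef_smul_one_add_mul_transpose M hα).det_pos.ne'.isUnit
  refine ⟨hS, ?_⟩
  have hlim := tendsto_sub_smul_inv_one_add_smul_mul (Md * Mdᵀ) Md (Md * Mdᵀ * Md)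
  refine (hlim.mono_left nhdsWithin_le_nhds).congr' ?_
  filter_upwards [self_mem_nhdsWithin] with α (hα : 0 < α)
  exact (transpose_mul_inv_smul_one_add_mul_transpose h₁ h₂ h₃ h₄ (hS α hα)
    (posDef_one_add_smul_mul_transpose Md hα.le).det_pos.ne'.isUnit).symm
end

section
/- Let λ > 0 and x_1,...,x_T ∈ R^d, and set A_t = λ I_d + Σ_{s=1}^t x_s x_sᵀ. Then Σ_{t=1}^T x_tᵀ A_t⁻¹ x_t ≤ Σ_{k=1}^d log(1 + λ_k(G_T)/λ), where G_T = Σ_{t=1}^T x_t x_tᵀ and λ_k denotes the k-th largest eigenvalue. -/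
/-!
Write `A_t = A_{t-1} + x_t x_tᵀ`. The matrix determinant lemma gives
`det A_{t-1} = det A_t * (1 - x_tᵀ A_t⁻¹ x_t)`, so `log (1 - u) ≤ -u` bounds each term
`x_tᵀ A_t⁻¹ x_t` by `log det A_t - log det A_{t-1}`. The sum telescopes to
`log det (λ I + G_T) - log det (λ I)`, which the spectral theorem turns into
`Σ_k log (1 + λ_k(G_T) / λ)`.
-/

open Matrix Finset Real

theorem Finset.sum_Icc_le_sub_of_le_sub {M : Type*} [AddCommGroup M] [PartialOrder M]
    [IsOrderedAddMonoid M] {a f : ℕ → M} (h : ∀ t, a (t + 1) ≤ f (t + 1) - f t) (T : ℕ) :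
    ∑ t ∈ Icc 1 T, a t ≤ f T - f 0 := by
  induction T with
  | zero => simp
  | succ T ih =>
    calc ∑ t ∈ Icc 1 (T + 1), a t = ∑ t ∈ Icc 1 T, a t + a (T + 1) := sum_Icc_succ_top (by omega) a
      _ ≤ (f T - f 0) + (f (T + 1) - f T) := add_le_add ih (h T)
      _ = f (T + 1) - f 0 := by abel

namespace Matrix

variable {n : Type*} [Fintype n] [DecidableEq n]

theorem det_add_vecMulVec {R : Type*} [CommRing R] {A : Matrix n n R} (hA : IsUnit A.det)
    (u v : n → R) : (A + vecMulVec u v).det = A.det * (1 + v ⬝ᵥ A⁻¹ *ᵥ u) := by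
  rw [vecMulVec_eq Unit, det_add_replicateCol_mul_replicateRow hA, det_unique (n := Unit),
    Matrix.mul_assoc, ← replicateCol_mulVec, Matrix.add_apply, one_apply_eq,
    replicateRow_mul_replicateCol_apply]

theorem IsHermitian.det_smul_one_add {𝕜 : Type*} [RCLike 𝕜] {G : Matrix n n 𝕜}
    (hG : G.IsHermitian) (c : 𝕜) : (c • 1 + G).det = ∏ i, (c + hG.eigenvalues i) := by
  -- evaluate `charpoly G = ∏ i, (X - λ_i)` at `-c`
  have h := congrArg (Polynomial.eval (-c)) hG.charpoly_eq
  have hneg : scalar n (-c) - G = -(c • 1 + G) := by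
    rw [neg_add, scalar_apply, smul_one_eq_diagonal, diagonal_neg, sub_eq_neg_add, add_comm]
  have hprod : ∏ i, (-c - (hG.eigenvalues i : 𝕜)) =
      (-1) ^ Fintype.card n * ∏ i, (c + hG.eigenvalues i) := by
    rw [← card_univ, ← prod_const, ← prod_mul_distrib]
    exact prod_congr rfl fun _ _ => by ring
  simp only [eval_charpoly, hneg, det_neg, Polynomial.eval_prod, Polynomial.eval_sub,
    Polynomial.eval_X, Polynomial.eval_C, hprod] at h
  exact mul_left_cancel₀ (pow_ne_zero _ (neg_ne_zero.2 one_ne_zero)) h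

theorem PosSemidef.log_det_smul_one_add_sub {G : Matrix n n ℝ} (hG : G.PosSemidef) {c : ℝ}
    (hc : 0 < c) :
    log (c • 1 + G).det - log (c • 1 : Matrix n n ℝ).det =
      ∑ i, log (1 + hG.1.eigenvalues i / c) := by
  have hfactor : ∀ i, c + hG.1.eigenvalues i = c * (1 + hG.1.eigenvalues i / c) := fun i => by
    field_simp
  have hpos : ∀ i, 0 < 1 + hG.1.eigenvalues i / c := fun i => by
    have := hG.eigenvalues_nonneg i
    positivity
  rw [hG.1.det_smul_one_add, det_smul, det_one, mul_one]
  simp only [RCLike.ofReal_real_eq_id, id_eq]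
  rw [prod_congr rfl fun i _ => hfactor i, prod_mul_distrib, prod_const, card_univ,
    log_mul (by positivity) (prod_ne_zero_iff.2 fun i _ => (hpos i).ne'),
    log_prod fun i _ => (hpos i).ne']
  ring

theorem PosDef.dotProduct_inv_add_vecMulVec_le {B : Matrix n n ℝ} (hB : B.PosDef) (x : n → ℝ) :
    x ⬝ᵥ (B + vecMulVec x x)⁻¹ *ᵥ x ≤ log (B + vecMulVec x x).det - log B.det := by
  set C := B + vecMulVec x x
  have hC : C.PosDef := hB.add_posSemidef (by simpa using posSemidef_vecMulVec_self_star x)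
  have hBC : B = C + vecMulVec (-x) x := by simp [C, neg_vecMulVec]
  have hdet : B.det / C.det = 1 - x ⬝ᵥ C⁻¹ *ᵥ x := by
    rw [hBC, det_add_vecMulVec hC.det_pos.ne'.isUnit, mulVec_neg, dotProduct_neg,
      mul_div_cancel_left₀ _ hC.det_pos.ne', sub_eq_add_neg]
  have hlog := log_le_sub_one_of_pos (div_pos hB.det_pos hC.det_pos)
  rw [log_div hB.det_pos.ne' hC.det_pos.ne', hdet] at hlog
  linarith

end Matrix

/-- With `A_t = λ I_d + Σ_{s≤t} x_s x_sᵀ`, one has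
`Σ_{t=1}^T x_tᵀ A_t⁻¹ x_t ≤ Σ_k log(1 + λ_k(G_T)/λ)`. -/
theorem stmt14 {d : ℕ} (T : ℕ) (lam : ℝ) (hlam : 0 < lam)
    (x : ℕ → (Fin d → ℝ)) (A : ℕ → Matrix (Fin d) (Fin d) ℝ)
    (hA : ∀ t, A t = lam • 1 + ∑ s ∈ Finset.Icc 1 t, Matrix.vecMulVec (x s) (x s))
    (hG : (∑ s ∈ Finset.Icc 1 T, Matrix.vecMulVec (x s) (x s)).IsHermitian) :
    ∑ t ∈ Finset.Icc 1 T, x t ⬝ᵥ ((A t)⁻¹ *ᵥ x t) ≤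
      ∑ k : Fin d, Real.log (1 + hG.eigenvalues k / lam) := by
  have hGram : ∀ t, (∑ s ∈ Icc 1 t, vecMulVec (x s) (x s)).PosSemidef := fun t =>
    posSemidef_sum _ fun s _ => by simpa using posSemidef_vecMulVec_self_star (x s)
  have hA_posDef : ∀ t, (A t).PosDef := fun t => by
    rw [hA t]
    exact (PosDef.one.smul hlam).add_posSemidef (hGram t)
  have hA_succ : ∀ t, A (t + 1) = A t + vecMulVec (x (t + 1)) (x (t + 1)) := fun t => by
    rw [hA, hA, sum_Icc_succ_top (by omega), add_assoc]
  calc ∑ t ∈ Icc 1 T, x t ⬝ᵥ (A t)⁻¹ *ᵥ x t ≤ log (A T).det - log (A 0).det :=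
        sum_Icc_le_sub_of_le_sub (f := fun t => log (A t).det) (fun t => by
          rw [hA_succ]
          exact (hA_posDef t).dotProduct_inv_add_vecMulVec_le _) T
    _ = ∑ k, log (1 + hG.eigenvalues k / lam) := by
      have hA_zero : A 0 = lam • 1 := by simp [hA]
      rw [hA T, hA_zero]
      exact (hGram T).log_det_smul_one_add_sub hlam
end

section
/- Let λ > 0, x_1,...,x_T ∈ R^d, y_1,...,y_T ∈ R, A_t = λ I_d + Σ_{s=1}^t x_s x_sᵀ, b_t = Σ_{s=1}^t y_s x_s, û_t = A_t⁻¹ b_{t-1} and ŭ_t = A_{t-1}⁻¹ b_{t-1}. Denote L_t(u) = Σ_{s=1}^t (y_s - u·x_s)² + λ‖u‖². Then for each t, (y_t - û_t·x_t)² + L_{t-1}(ŭ_t) - L_t(ŭ_{t+1}) = (ŭ_{t+1} - û_t)ᵀ A_t (ŭ_{t+1} - û_t) - (û_t - ŭ_t)ᵀ A_{t-1} (û_t - ŭ_t). -/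
/-!
`L_t(u) = Σ y_s² - 2 u·b_t + uᵀ A_t u` is a quadratic with Hessian `A_t`, and `ŭ_{t+1}` solves
`A_t u = b_t`, so completing the square gives `L_t(u) - L_t(ŭ_{t+1}) = (u - ŭ_{t+1})ᵀ A_t (u - ŭ_{t+1})`
for every `u`. Combined with `L_t(u) = L_{t-1}(u) + (y_t - u·x_t)²` at `u = û_t`, the two
completed squares at times `t` and `t - 1` give the identity.
-/

open Matrix

namespace Matrix

variable {ι n R : Type*} [CommRing R]

def ridgeMatrix [DecidableEq n] (lam : R) (x : ι → n → R) (S : Finset ι) : Matrix n n R :=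
  lam • 1 + ∑ s ∈ S, vecMulVec (x s) (x s)

def ridgeLoss [Fintype n] (lam : R) (x : ι → n → R) (y : ι → R) (S : Finset ι) (u : n → R) : R :=
  ∑ s ∈ S, (y s - u ⬝ᵥ x s) ^ 2 + lam * ∑ i, u i ^ 2

theorem isSymm_ridgeMatrix [DecidableEq n] (lam : R) (x : ι → n → R) (S : Finset ι) :
    (ridgeMatrix lam x S).IsSymm := by
  simp only [IsSymm, ridgeMatrix, transpose_add, transpose_smul, transpose_one, transpose_sum,
    transpose_vecMulVec]

variable [Fintype n]

theorem ridgeLoss_Icc_succ_top (lam : R) (x : ℕ → n → R) (y : ℕ → R) {a k : ℕ} (hak : a ≤ k + 1)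
    (u : n → R) :
    ridgeLoss lam x y (Finset.Icc a (k + 1)) u =
      ridgeLoss lam x y (Finset.Icc a k) u + (y (k + 1) - u ⬝ᵥ x (k + 1)) ^ 2 := by
  rw [ridgeLoss, ridgeLoss, Finset.sum_Icc_succ_top hak]
  ring

theorem dotProduct_vecMulVec_self_mulVec (u w : n → R) :
    u ⬝ᵥ (vecMulVec w w *ᵥ u) = (u ⬝ᵥ w) ^ 2 := by
  rw [vecMulVec_mulVec, op_smul_eq_smul, dotProduct_smul, smul_eq_mul, dotProduct_comm w, sq]

theorem dotProduct_self_eq_sum_sq (u : n → R) : u ⬝ᵥ u = ∑ i, u i ^ 2 := by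
  simp only [dotProduct, sq]

theorem IsSymm.dotProduct_mulVec_comm {M : Matrix n n R} (hM : M.IsSymm) (u v : n → R) :
    u ⬝ᵥ (M *ᵥ v) = v ⬝ᵥ (M *ᵥ u) := by
  rw [dotProduct_mulVec, ← mulVec_transpose, hM.eq, dotProduct_comm]

theorem IsSymm.dotProduct_mulVec_sub_self {M : Matrix n n R} (hM : M.IsSymm) {v b : n → R}
    (hv : M *ᵥ v = b) (u : n → R) :
    (u ⬝ᵥ (M *ᵥ u) - 2 * (u ⬝ᵥ b)) - (v ⬝ᵥ (M *ᵥ v) - 2 * (v ⬝ᵥ b)) =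
      (u - v) ⬝ᵥ (M *ᵥ (u - v)) := by
  rw [mulVec_sub, dotProduct_sub, sub_dotProduct, sub_dotProduct, hv,
    hM.dotProduct_mulVec_comm v u, hv]
  ring

theorem dotProduct_mulVec_sub_comm (M : Matrix n n R) (u v : n → R) :
    (u - v) ⬝ᵥ (M *ᵥ (u - v)) = (v - u) ⬝ᵥ (M *ᵥ (v - u)) := by
  rw [← neg_sub v u, mulVec_neg, neg_dotProduct, dotProduct_neg, neg_neg]

theorem mulVec_nonsing_inv_mulVec [DecidableEq n] {M : Matrix n n R} (hM : IsUnit M.det)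
    (v : n → R) : M *ᵥ (M⁻¹ *ᵥ v) = v := by
  rw [mulVec_mulVec, mul_nonsing_inv M hM, one_mulVec]

variable [DecidableEq n] (lam : R) (x : ι → n → R) (y : ι → R) (S : Finset ι)

theorem dotProduct_ridgeMatrix_mulVec (u : n → R) :
    u ⬝ᵥ (ridgeMatrix lam x S *ᵥ u) = lam * ∑ i, u i ^ 2 + ∑ s ∈ S, (u ⬝ᵥ x s) ^ 2 := by
  simp only [ridgeMatrix, add_mulVec, sum_mulVec, smul_mulVec, one_mulVec, dotProduct_add,
    dotProduct_sum, dotProduct_smul, smul_eq_mul, dotProduct_vecMulVec_self_mulVec,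
    dotProduct_self_eq_sum_sq]

theorem ridgeLoss_eq (u : n → R) :
    ridgeLoss lam x y S u = ∑ s ∈ S, y s ^ 2 - 2 * (u ⬝ᵥ ∑ s ∈ S, y s • x s)
      + u ⬝ᵥ (ridgeMatrix lam x S *ᵥ u) := by
  simp only [ridgeLoss, dotProduct_ridgeMatrix_mulVec, sub_sq, Finset.sum_add_distrib,
    Finset.sum_sub_distrib, dotProduct_sum, dotProduct_smul, smul_eq_mul, Finset.mul_sum,
    mul_assoc]
  ring

theorem ridgeLoss_sub_of_mulVec_eq {v : n → R}
    (hv : ridgeMatrix lam x S *ᵥ v = ∑ s ∈ S, y s • x s) (u : n → R) :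
    ridgeLoss lam x y S u - ridgeLoss lam x y S v =
      (u - v) ⬝ᵥ (ridgeMatrix lam x S *ᵥ (u - v)) := by
  rw [← (isSymm_ridgeMatrix lam x S).dotProduct_mulVec_sub_self hv, ridgeLoss_eq, ridgeLoss_eq]
  ring

end Matrix

theorem Matrix.posDef_ridgeMatrix {ι n : Type*} [Fintype n] [DecidableEq n] {lam : ℝ}
    (hlam : 0 < lam) (x : ι → n → ℝ) (S : Finset ι) : (ridgeMatrix lam x S).PosDef :=
  (PosDef.one.smul hlam).add_posSemidef
    (posSemidef_sum S fun s _ => by simpa using posSemidef_vecMulVec_self_star (x s))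

theorem stmt17_general {d : ℕ} (lam : ℝ) (hlam : 0 < lam)
    (x : ℕ → (Fin d → ℝ)) (y : ℕ → ℝ)
    (A : ℕ → Matrix (Fin d) (Fin d) ℝ)
    (hA : ∀ t, A t = lam • 1 + ∑ s ∈ Finset.Icc 1 t, Matrix.vecMulVec (x s) (x s))
    (b : ℕ → Fin d → ℝ) (hb : ∀ t, b t = ∑ s ∈ Finset.Icc 1 t, y s • x s)
    (uhat ubrev : ℕ → Fin d → ℝ)
    (hubrev : ∀ t, ubrev t = (A (t - 1))⁻¹ *ᵥ b (t - 1))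
    (L : ℕ → (Fin d → ℝ) → ℝ)
    (hL : ∀ t u, L t u = (∑ s ∈ Finset.Icc 1 t, (y s - u ⬝ᵥ x s) ^ 2) + lam * ∑ i, u i ^ 2)
    (t : ℕ) (ht : 1 ≤ t) :
    (y t - uhat t ⬝ᵥ x t) ^ 2 + L (t - 1) (ubrev t) - L t (ubrev (t + 1)) =
      (ubrev (t + 1) - uhat t) ⬝ᵥ (A t *ᵥ (ubrev (t + 1) - uhat t)) -
        (uhat t - ubrev t) ⬝ᵥ (A (t - 1) *ᵥ (uhat t - ubrev t)) := by
  have hA' (t : ℕ) : A t = ridgeMatrix lam x (Finset.Icc 1 t) := hA t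
  have hL' (t : ℕ) : L t = ridgeLoss lam x y (Finset.Icc 1 t) := funext (hL t)
  have solve (t : ℕ) (w : Fin d → ℝ) : A t *ᵥ ((A t)⁻¹ *ᵥ w) = w :=
    mulVec_nonsing_inv_mulVec (hA' t ▸ (posDef_ridgeMatrix hlam x _).det_pos.ne'.isUnit) w
  have critical (t : ℕ) :
      ridgeMatrix lam x (Finset.Icc 1 t) *ᵥ ubrev (t + 1) = ∑ s ∈ Finset.Icc 1 t, y s • x s := by
    rw [← hA', ← hb, hubrev, Nat.add_sub_cancel, solve]
  obtain ⟨k, rfl⟩ : ∃ k, t = k + 1 := ⟨t - 1, (Nat.sub_add_cancel ht).symm⟩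
  have prev := ridgeLoss_sub_of_mulVec_eq lam x y _ (critical k) (uhat (k + 1))
  have curr := ridgeLoss_sub_of_mulVec_eq lam x y _ (critical (k + 1)) (uhat (k + 1))
  have step := ridgeLoss_Icc_succ_top lam x y (Nat.le_add_left 1 k) (uhat (k + 1))
  rw [Nat.add_sub_cancel, hL', hL', hA', hA', dotProduct_mulVec_sub_comm _ (ubrev _)]
  linarith

/-- Exact algebraic identity in the analysis of the Vovk–Azoury–Warmuth
forecaster: with `û_t = A_t⁻¹ b_{t-1}`, `ŭ_t = A_{t-1}⁻¹ b_{t-1}` and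
`L_t(u) = Σ_{s≤t} (y_s - u·x_s)² + λ‖u‖²`, one has
`(y_t - û_t·x_t)² + L_{t-1}(ŭ_t) - L_t(ŭ_{t+1})
  = (ŭ_{t+1} - û_t)ᵀ A_t (ŭ_{t+1} - û_t) - (û_t - ŭ_t)ᵀ A_{t-1} (û_t - ŭ_t)`. -/
theorem stmt17 {d : ℕ} (lam : ℝ) (hlam : 0 < lam)
    (x : ℕ → (Fin d → ℝ)) (y : ℕ → ℝ)
    (A : ℕ → Matrix (Fin d) (Fin d) ℝ)
    (hA : ∀ t, A t = lam • 1 + ∑ s ∈ Finset.Icc 1 t, Matrix.vecMulVec (x s) (x s))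
    (b : ℕ → Fin d → ℝ) (hb : ∀ t, b t = ∑ s ∈ Finset.Icc 1 t, y s • x s)
    (uhat ubrev : ℕ → Fin d → ℝ)
    (huhat : ∀ t, uhat t = (A t)⁻¹ *ᵥ b (t - 1))
    (hubrev : ∀ t, ubrev t = (A (t - 1))⁻¹ *ᵥ b (t - 1))
    (L : ℕ → (Fin d → ℝ) → ℝ)
    (hL : ∀ t u, L t u = (∑ s ∈ Finset.Icc 1 t, (y s - u ⬝ᵥ x s) ^ 2) + lam * ∑ i, u i ^ 2)
    (t : ℕ) (ht : 1 ≤ t) :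
    (y t - uhat t ⬝ᵥ x t) ^ 2 + L (t - 1) (ubrev t) - L t (ubrev (t + 1)) =
      (ubrev (t + 1) - uhat t) ⬝ᵥ (A t *ᵥ (ubrev (t + 1) - uhat t)) -
        (uhat t - ubrev t) ⬝ᵥ (A (t - 1) *ᵥ (uhat t - ubrev t)) :=
  stmt17_general lam hlam x y A hA b hb uhat ubrev hubrev L hL t ht
end
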